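/- arXiv:2408.13814 — 2 statements merged into one kernel-verified Lean document; each statement's English description precedes it below -/
import Mathlib

section
/- For α ∈ (0,1], k > 0, and p > 0 such that (p+α−1)/(αk) > 0, the conformable gamma function satisfies Γ_k^α(p) = (αk)^{(p+α−1)/(αk) − 1} · Γ((p+α−1)/(αk)), where Γ is the classical gamma function. -/
open MeasureTheory

/-- The conformable gamma function `Γ_k^α(p) = ∫_0^∞ t^(p-1) e^(-t^(αk)/(αk)) t^(α-1) dt`. -/
noncomputable def confGamma (α k p : ℝ) : ℝ :=
  ∫ t in Set.Ioi (0 : ℝ), t ^ (p - 1) * Real.exp (-t ^ (α * k) / (α * k)) * t ^ (α - 1)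

/-- `Γ_k^α(p) = (αk)^((p+α-1)/(αk) - 1) Γ((p+α-1)/(αk))`. -/
theorem confGamma_eq_rpow_mul_Gamma
    (α k p : ℝ) (hα0 : 0 < α) (hα1 : α ≤ 1) (hk : 0 < k) (hp : 0 < p)
    (h : 0 < (p + α - 1) / (α * k)) :
    confGamma α k p =
      (α * k) ^ ((p + α - 1) / (α * k) - 1) * Real.Gamma ((p + α - 1) / (α * k)) := by
  have hαk : 0 < α * k := mul_pos hα0 hk
  have h1 : 0 < p + α - 1 := by
    have := mul_pos h hαk
    rwa [div_mul_cancel₀ _ hαk.ne'] at this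
  have hq : (-1 : ℝ) < p + α - 2 := by linarith
  have key := integral_rpow_mul_exp_neg_mul_rpow hαk hq (b := (α * k)⁻¹) (by positivity)
  have hcongr : confGamma α k p =
      ∫ t in Set.Ioi (0 : ℝ), t ^ (p + α - 2) * Real.exp (-(α * k)⁻¹ * t ^ (α * k)) := by
    unfold confGamma
    refine setIntegral_congr_fun measurableSet_Ioi fun t ht => ?_
    rw [mul_comm (t ^ (p - 1) * _), ← mul_assoc, ← Real.rpow_add ht]
    ring_nf
  rw [hcongr, key]
  have h2 : p + α - 2 + 1 = p + α - 1 := by ring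
  rw [h2, Real.inv_rpow hαk.le, ← Real.rpow_neg hαk.le, neg_div, neg_neg, one_div,
    ← Real.rpow_neg_one (α * k), ← Real.rpow_add hαk, sub_eq_add_neg]
  ring_nf
end

section
/- For α ∈ (0,1] and k > 0, the conformable gamma function satisfies the functional equation Γ_k^α(x + αk) = (x + α − 1) · Γ_k^α(x) for all x with x + α − 1 > 0. -/
open MeasureTheory

lemma confGamma_eq (α k p : ℝ) (hα0 : 0 < α) (hk : 0 < k) (hp : 0 < p + α - 1) :
    confGamma α k p = (α * k) ^ ((p + α - 1) / (α * k)) * (1 / (α * k)) *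
      Real.Gamma ((p + α - 1) / (α * k)) := by
  have hc : 0 < α * k := mul_pos hα0 hk
  have h1 : confGamma α k p
      = ∫ t in Set.Ioi (0 : ℝ), t ^ (p + α - 2) * Real.exp (-(1 / (α * k)) * t ^ (α * k)) := by
    refine setIntegral_congr_fun measurableSet_Ioi (fun t ht => ?_)
    rw [Set.mem_Ioi] at ht
    rw [mul_comm (t ^ (p - 1) * _), ← mul_assoc, ← Real.rpow_add ht]
    ring_nf
  rw [h1, integral_rpow_mul_exp_neg_mul_rpow hc (by linarith) (by positivity)]
  rw [show p + α - 2 + 1 = p + α - 1 by ring]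
  congr 1
  rw [one_div, Real.inv_rpow hc.le, ← Real.rpow_neg hc.le, neg_div, neg_neg]

/-- Functional equation: `Γ_k^α(x + αk) = (x + α - 1) Γ_k^α(x)`. -/
theorem confGamma_add
    (α k x : ℝ) (hα0 : 0 < α) (hα1 : α ≤ 1) (hk : 0 < k) (hx : 0 < x + α - 1) :
    confGamma α k (x + α * k) = (x + α - 1) * confGamma α k x := by
  have hc : 0 < α * k := mul_pos hα0 hk
  have hy : 0 < (x + α - 1) / (α * k) := div_pos hx hc
  have h2 : 0 < x + α * k + α - 1 := by linarith
  rw [confGamma_eq α k _ hα0 hk h2, confGamma_eq α k x hα0 hk hx]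
  have hq : (x + α * k + α - 1) / (α * k) = (x + α - 1) / (α * k) + 1 := by
    field_simp
    ring
  rw [hq, Real.Gamma_add_one hy.ne', Real.rpow_add hc, Real.rpow_one]
  field_simp
end
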